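/- arXiv:2205.11814 — 2 statements merged into one kernel-verified Lean document; each statement's English description precedes it below -/
import Mathlib

section
/- Performance Difference Lemma (Lemma 1, finite-state version). Let a finite Markov decision process with discount factor γ ∈ [0,1) be given. For any function f : S × A × S → ℝ and any stationary policies π and π', the expected discounted returns satisfy J_f(π') − J_f(π) = (1/(1−γ)) · Σ_{s∈S} d^{π'}(s) · Σ_{a∈A} π'(a|s) · A_f^π(s,a). -/
open Finset

/-- A finite Markov decision process. -/
structure MDP (S A : Type) [Fintype S] [Fintype A] where
  P : S → A → S → ℝ
  P_nonneg : ∀ s a s', 0 ≤ P s a s'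
  P_sum : ∀ s a, ∑ s', P s a s' = 1
  μ : S → ℝ
  μ_nonneg : ∀ s, 0 ≤ μ s
  μ_sum : ∑ s, μ s = 1
  γ : ℝ
  γ_nonneg : 0 ≤ γ
  γ_lt_one : γ < 1

/-- A stationary policy: a probability distribution over actions for each state. -/
def IsPolicy {S A : Type} [Fintype S] [Fintype A] (π : S → A → ℝ) : Prop :=
  (∀ s a, 0 ≤ π s a) ∧ (∀ s, ∑ a, π s a = 1)

/-- The time-`t` state distribution `μ_t^π`. -/
def stateDist {S A : Type} [Fintype S] [Fintype A] (M : MDP S A) (π : S → A → ℝ) :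
    ℕ → S → ℝ
  | 0 => M.μ
  | (t + 1) => fun s' => ∑ s, ∑ a, stateDist M π t s * π s a * M.P s a s'

/-- The expected discounted return `J_f(π)`. -/
noncomputable def Jret {S A : Type} [Fintype S] [Fintype A] (M : MDP S A)
    (π : S → A → ℝ) (f : S → A → S → ℝ) : ℝ :=
  ∑' t : ℕ, M.γ ^ t * ∑ s, ∑ a, ∑ s', stateDist M π t s * π s a * M.P s a s' * f s a s'

/-- The discounted future state distribution `d^π`. -/
noncomputable def dDist {S A : Type} [Fintype S] [Fintype A] (M : MDP S A)
    (π : S → A → ℝ) (s : S) : ℝ :=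
  (1 - M.γ) * ∑' t : ℕ, M.γ ^ t * stateDist M π t s

/-- `V` satisfies the Bellman equation for `f` under policy `π`. -/
def IsValue {S A : Type} [Fintype S] [Fintype A] (M : MDP S A) (π : S → A → ℝ)
    (f : S → A → S → ℝ) (V : S → ℝ) : Prop :=
  ∀ s, V s = ∑ a, π s a * ∑ s', M.P s a s' * (f s a s' + M.γ * V s')

/-- The advantage function `A_f^π` built from a value function `V`. -/
def adv {S A : Type} [Fintype S] [Fintype A] (M : MDP S A)
    (f : S → A → S → ℝ) (V : S → ℝ) (s : S) (a : A) : ℝ :=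
  (∑ s', M.P s a s' * (f s a s' + M.γ * V s')) - V s

/-!
Write `r_π(s)` for the expected one-step reward and `𝔼_t` for expectation under `μ_t^{π'}`.
Unfolding the advantage, `𝔼_t[Σ_a π'(a|·) A^π(·,a)] = 𝔼_t[r_{π'}] + γ 𝔼_{t+1}[V] - 𝔼_t[V]` holds for
any `V` whatsoever, so after discounting the `V`-terms telescope and
`Σ_t γ^t 𝔼_t[Σ_a π' A^π] = J(π') - 𝔼_μ[V]`. For `π' = π` the Bellman equation makes the averaged
advantage vanish, giving `J(π) = 𝔼_μ[V]`; subtracting yields the lemma, since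
`Σ_s d^{π'}(s) g(s) = (1 - γ) Σ_t γ^t 𝔼_t[g]`.
-/

section StateDistribution

variable {S A : Type} [Fintype S] [Fintype A] (M : MDP S A) (π : S → A → ℝ)

def stepExpect (f : S → A → S → ℝ) (s : S) : ℝ :=
  ∑ a, π s a * ∑ s', M.P s a s' * f s a s'

lemma stepExpect_const_one (hπ : ∀ s, ∑ a, π s a = 1) (s : S) :
    stepExpect M π (fun _ _ _ => 1) s = 1 := by
  simp [stepExpect, M.P_sum, hπ]

lemma sum_stateDist_succ_mul (t : ℕ) (g : S → ℝ) :
    ∑ s', stateDist M π (t + 1) s' * g s' =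
      ∑ s, stateDist M π t s * stepExpect M π (fun _ _ s' => g s') s := by
  simp only [stateDist, stepExpect, sum_mul, mul_sum]
  rw [sum_comm]
  refine sum_congr rfl fun s _ => ?_
  rw [sum_comm]
  exact sum_congr rfl fun a _ => sum_congr rfl fun s' _ => by ring

lemma stateDist_nonneg (hπ : ∀ s a, 0 ≤ π s a) (t : ℕ) (s : S) : 0 ≤ stateDist M π t s := by
  induction t generalizing s with
  | zero => exact M.μ_nonneg s
  | succ t ih =>
    exact sum_nonneg fun s _ => sum_nonneg fun a _ =>
      mul_nonneg (mul_nonneg (ih s) (hπ s a)) (M.P_nonneg s a _)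

lemma sum_stateDist (hπ : ∀ s, ∑ a, π s a = 1) (t : ℕ) : ∑ s, stateDist M π t s = 1 := by
  induction t with
  | zero => exact M.μ_sum
  | succ t ih =>
    simpa [stepExpect_const_one M π hπ, ih] using sum_stateDist_succ_mul M π t fun _ => 1

lemma stateDist_le_one (hπ : IsPolicy π) (t : ℕ) (s : S) : stateDist M π t s ≤ 1 :=
  sum_stateDist M π hπ.2 t ▸
    single_le_sum (fun s _ => stateDist_nonneg M π hπ.1 t s) (mem_univ s)

lemma summable_discounted_stateDist (hπ : IsPolicy π) (s : S) :
    Summable fun t => M.γ ^ t * stateDist M π t s := by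
  refine (summable_geometric_of_lt_one M.γ_nonneg M.γ_lt_one).of_nonneg_of_le
    (fun t => mul_nonneg (pow_nonneg M.γ_nonneg t) (stateDist_nonneg M π hπ.1 t s))
    fun t => ?_
  simpa using mul_le_mul_of_nonneg_left (stateDist_le_one M π hπ t s) (pow_nonneg M.γ_nonneg t)

lemma summable_discounted_expect (hπ : IsPolicy π) (g : S → ℝ) :
    Summable fun t => M.γ ^ t * ∑ s, stateDist M π t s * g s := by
  simp only [mul_sum, ← mul_assoc]
  exact summable_sum fun s _ => (summable_discounted_stateDist M π hπ s).mul_right (g s)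

lemma sum_dDist_mul (hπ : IsPolicy π) (g : S → ℝ) :
    ∑ s, dDist M π s * g s = (1 - M.γ) * ∑' t, M.γ ^ t * ∑ s, stateDist M π t s * g s := by
  simp only [dDist, mul_assoc, ← mul_sum, ← tsum_mul_right]
  rw [← Summable.tsum_finsetSum fun s _ => ?_]
  · simp only [mul_sum]
  · simpa only [mul_assoc] using (summable_discounted_stateDist M π hπ s).mul_right (g s)

end StateDistribution

section Advantage

variable {S A : Type} [Fintype S] [Fintype A] (M : MDP S A) (π : S → A → ℝ)
  (f : S → A → S → ℝ) (V : S → ℝ)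

lemma Jret_eq_tsum_stepExpect :
    Jret M π f = ∑' t, M.γ ^ t * ∑ s, stateDist M π t s * stepExpect M π f s := by
  simp only [Jret, stepExpect, mul_sum]
  exact tsum_congr fun t => by simp only [mul_assoc]

lemma sum_mul_adv (hπ : ∀ s, ∑ a, π s a = 1) (s : S) :
    ∑ a, π s a * adv M f V s a =
      stepExpect M π f s + M.γ * stepExpect M π (fun _ _ s' => V s') s - V s := by
  simp only [adv, stepExpect, mul_sub, sum_sub_distrib, ← sum_mul, hπ s, one_mul, mul_add,
    sum_add_distrib, mul_sum]
  congr 2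
  exact sum_congr rfl fun a _ => sum_congr rfl fun s' _ => by ring

lemma IsValue.sum_mul_adv_eq_zero (hπ : ∀ s, ∑ a, π s a = 1) (hV : IsValue M π f V) (s : S) :
    ∑ a, π s a * adv M f V s a = 0 := by
  simp only [adv, mul_sub, sum_sub_distrib, ← sum_mul, hπ s, one_mul, ← hV s, sub_self]

lemma tsum_discounted_sum_mul_adv (hπ : IsPolicy π) :
    ∑' t, M.γ ^ t * ∑ s, stateDist M π t s * ∑ a, π s a * adv M f V s a =
      Jret M π f - ∑ s, M.μ s * V s := by
  set b : ℕ → ℝ := fun t => M.γ ^ t * ∑ s, stateDist M π t s * V s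
  have hb : Summable b := summable_discounted_expect M π hπ V
  have hsplit : ∀ t, M.γ ^ t * ∑ s, stateDist M π t s * ∑ a, π s a * adv M f V s a =
      M.γ ^ t * ∑ s, stateDist M π t s * stepExpect M π f s + (b (t + 1) - b t) := by
    intro t
    simp only [b, sum_mul_adv M π f V hπ.2, sum_stateDist_succ_mul, mul_sub, mul_add,
      sum_sub_distrib, sum_add_distrib, pow_succ]
    simp only [mul_sum]
    ring_nf
  rw [tsum_congr hsplit, (summable_discounted_expect M π hπ _).tsum_add
      (((summable_nat_add_iff 1).mpr hb).sub hb), ((summable_nat_add_iff 1).mpr hb).tsum_sub hb,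
    hb.tsum_eq_zero_add, ← Jret_eq_tsum_stepExpect]
  simp [b, stateDist, sub_eq_add_neg]

lemma Jret_eq_sum_mul_value (hπ : IsPolicy π) (hV : IsValue M π f V) :
    Jret M π f = ∑ s, M.μ s * V s := by
  have h := tsum_discounted_sum_mul_adv M π f V hπ
  simp only [IsValue.sum_mul_adv_eq_zero M π f V hπ.2 hV, mul_zero, sum_const_zero,
    tsum_zero] at h
  linarith

end Advantage

theorem performance_difference_lemma_general {S A : Type} [Fintype S] [Fintype A]
    (M : MDP S A) (f : S → A → S → ℝ)
    (π π' : S → A → ℝ) (hπ : IsPolicy π) (hπ' : IsPolicy π')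
    (V : S → ℝ) (hV : IsValue M π f V) :
    Jret M π' f - Jret M π f =
      (1 / (1 - M.γ)) * ∑ s, dDist M π' s * ∑ a, π' s a * adv M f V s a := by
  have hγ : 1 - M.γ ≠ 0 := by linarith [M.γ_lt_one]
  rw [sum_dDist_mul M π' hπ', tsum_discounted_sum_mul_adv M π' f V hπ',
    Jret_eq_sum_mul_value M π f V hπ hV]
  field_simp

/-- Performance Difference Lemma (Lemma 1, finite-state version). -/
theorem performance_difference_lemma {S A : Type} [Fintype S] [Fintype A]
    [Nonempty S] [Nonempty A] (M : MDP S A) (f : S → A → S → ℝ)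
    (π π' : S → A → ℝ) (hπ : IsPolicy π) (hπ' : IsPolicy π')
    (V : S → ℝ) (hV : IsValue M π f V) :
    Jret M π' f - Jret M π f =
      (1 / (1 - M.γ)) * ∑ s, dDist M π' s * ∑ a, π' s a * adv M f V s a :=
  performance_difference_lemma_general M f π π' hπ hπ' V hV
end

section
/- Proposition 1 (finite-state version). Let a finite constrained Markov decision process with discount factor γ ∈ [0,1), reward R, cost functions C_1,…,C_m and cost limits d_1,…,d_m be given. Suppose π_k is a stationary policy with J_{C_i}(π_k) ≤ d_i for all i, and suppose π_{k+1} maximizes, over all stationary policies π, the surrogate objective Σ_{s} d^π(s) · Σ_{a} π(a|s) · A_R^{π_k}(s,a) subject to the constraints J_{C_i}(π_k) + (1/(1−γ)) · Σ_{s} d^π(s) · Σ_{a} π(a|s) · A_{C_i}^{π_k}(s,a) ≤ d_i for all i = 1,…,m. Then π_{k+1} yields a monotonic return improvement and hard constraint satisfaction: J_R(π_{k+1}) ≥ J_R(π_k) and J_{C_i}(π_{k+1}) ≤ d_i for all i. -/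
open Finset

/-!
Telescoping `γ^t Σ_s μ_t^π(s) V(s)` over `t` gives, for every function `V`,
`J_f(π) = Σ_s μ(s) V(s) + (1 - γ)⁻¹ Σ_s d^π(s) Σ_a π(a|s) A(s,a)` with `A` the advantage built
from `V`. If `V` is the value function of `π'`, the `π'`-average of `A` vanishes, which gives the
performance difference identity `J_f(π) = J_f(π') + (1 - γ)⁻¹ Σ_s d^π(s) Σ_a π(a|s) A_f^{π'}(s,a)`.
So the surrogate constraints are the true constraints, and `π_k` is admissible for the surrogate
problem with objective `0`; the maximizer therefore has nonnegative surrogate gain.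
-/

namespace MDP

variable {S A : Type} [Fintype S] [Fintype A] (M : MDP S A) {π : S → A → ℝ}

theorem sum_stateDist_succ_mul (π : S → A → ℝ) (t : ℕ) (g : S → ℝ) :
    ∑ s', stateDist M π (t + 1) s' * g s' =
      ∑ s, stateDist M π t s * ∑ a, π s a * ∑ s', M.P s a s' * g s' := by
  simp only [stateDist, sum_mul, mul_sum]
  rw [sum_comm]
  refine sum_congr rfl fun s _ => ?_
  rw [sum_comm]
  exact sum_congr rfl fun a _ => sum_congr rfl fun s' _ => by ring

theorem stateDist_nonneg (hπ : IsPolicy π) : ∀ t s, 0 ≤ stateDist M π t s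
  | 0, s => M.μ_nonneg s
  | t + 1, s' => sum_nonneg fun s _ => sum_nonneg fun a _ =>
      mul_nonneg (mul_nonneg (stateDist_nonneg hπ t s) (hπ.1 s a)) (M.P_nonneg s a s')

theorem sum_stateDist (hπ : IsPolicy π) : ∀ t, ∑ s, stateDist M π t s = 1
  | 0 => M.μ_sum
  | t + 1 => by
    simpa [M.P_sum, ← mul_sum, hπ.2, sum_stateDist hπ t] using
      sum_stateDist_succ_mul M π t fun _ => 1

theorem stateDist_le_one (hπ : IsPolicy π) (t : ℕ) (s : S) : stateDist M π t s ≤ 1 :=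
  sum_stateDist M hπ t ▸
    single_le_sum (fun s' _ => stateDist_nonneg M hπ t s') (mem_univ s)

theorem summable_discounted_stateDist (hπ : IsPolicy π) (s : S) :
    Summable fun t => M.γ ^ t * stateDist M π t s :=
  (summable_geometric_of_lt_one M.γ_nonneg M.γ_lt_one).of_nonneg_of_le
    (fun t => mul_nonneg (pow_nonneg M.γ_nonneg t) (stateDist_nonneg M hπ t s))
    (fun t => mul_le_of_le_one_right (pow_nonneg M.γ_nonneg t) (stateDist_le_one M hπ t s))

theorem summable_discounted_sum_stateDist_mul (hπ : IsPolicy π) (g : S → ℝ) :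
    Summable fun t => M.γ ^ t * ∑ s, stateDist M π t s * g s := by
  simp only [mul_sum, ← mul_assoc]
  exact summable_sum fun s _ => (M.summable_discounted_stateDist hπ s).mul_right _

theorem tsum_discounted_sum_stateDist_mul (hπ : IsPolicy π) (g : S → ℝ) :
    ∑' t, M.γ ^ t * ∑ s, stateDist M π t s * g s =
      (1 / (1 - M.γ)) * ∑ s, dDist M π s * g s := by
  have hγ : 1 - M.γ ≠ 0 := (sub_pos.2 M.γ_lt_one).ne'
  simp only [mul_sum, ← mul_assoc]
  rw [Summable.tsum_finsetSum fun s _ => (summable_discounted_stateDist M hπ s).mul_right _]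
  refine sum_congr rfl fun s _ => ?_
  rw [tsum_mul_right, dDist]
  field_simp

theorem sum_policy_mul_adv {s : S} (hπ : ∑ a, π s a = 1) (f : S → A → S → ℝ) (V : S → ℝ) :
    ∑ a, π s a * adv M f V s a =
      ∑ a, π s a * ∑ s', M.P s a s' * (f s a s' + M.γ * V s') - V s := by
  simp only [adv, mul_sub, sum_sub_distrib, ← sum_mul, hπ, one_mul]

theorem sum_policy_mul_adv_eq_zero (hπ : IsPolicy π) {f : S → A → S → ℝ} {V : S → ℝ}
    (hV : IsValue M π f V) (s : S) : ∑ a, π s a * adv M f V s a = 0 := by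
  rw [M.sum_policy_mul_adv (hπ.2 s), ← hV s, sub_self]

theorem sum_stateDist_reward_eq_adv_add_sub (hπ : IsPolicy π) (f : S → A → S → ℝ) (V : S → ℝ)
    (t : ℕ) :
    ∑ s, ∑ a, ∑ s', stateDist M π t s * π s a * M.P s a s' * f s a s' =
      ∑ s, stateDist M π t s * ∑ a, π s a * adv M f V s a +
        ∑ s, stateDist M π t s * V s - M.γ * ∑ s', stateDist M π (t + 1) s' * V s' := by
  have hstate : ∀ s, ∑ a, ∑ s', stateDist M π t s * π s a * M.P s a s' * f s a s' =
      stateDist M π t s * (∑ a, π s a * adv M f V s a + V s -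
        M.γ * ∑ a, π s a * ∑ s', M.P s a s' * V s') := fun s => by
    rw [M.sum_policy_mul_adv (hπ.2 s), sub_add_cancel, mul_sum, ← sum_sub_distrib, mul_sum]
    refine sum_congr rfl fun a _ => ?_
    simp only [mul_sum, ← sum_sub_distrib]
    exact sum_congr rfl fun s' _ => by ring
  rw [sum_stateDist_succ_mul, sum_congr rfl fun s _ => hstate s, mul_sum, ← sum_add_distrib,
    ← sum_sub_distrib]
  exact sum_congr rfl fun s _ => by ring

theorem Jret_eq_initial_add_dDist_adv (hπ : IsPolicy π) (f : S → A → S → ℝ) (V : S → ℝ) :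
    Jret M π f = ∑ s, M.μ s * V s +
      (1 / (1 - M.γ)) * ∑ s, dDist M π s * ∑ a, π s a * adv M f V s a := by
  set e : ℕ → ℝ := fun t => M.γ ^ t * ∑ s, stateDist M π t s * V s
  set b : ℕ → ℝ := fun t => M.γ ^ t * ∑ s, stateDist M π t s * ∑ a, π s a * adv M f V s a
  have he := M.summable_discounted_sum_stateDist_mul hπ V
  have he_succ : Summable fun t => e (t + 1) := (summable_nat_add_iff 1).2 he
  have hb := M.summable_discounted_sum_stateDist_mul hπ fun s => ∑ a, π s a * adv M f V s a
  have hstep : ∀ t, M.γ ^ t * ∑ s, ∑ a, ∑ s', stateDist M π t s * π s a * M.P s a s' * f s a s'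
      = b t + (e t - e (t + 1)) := fun t => by
    rw [M.sum_stateDist_reward_eq_adv_add_sub hπ f V t]
    simp only [b, e, pow_succ]
    ring
  have htelescope : ∑' t, (e t - e (t + 1)) = e 0 := by
    rw [he.tsum_sub he_succ, he.tsum_eq_zero_add, add_sub_cancel_right]
  rw [Jret, tsum_congr hstep, hb.tsum_add (he.sub he_succ), htelescope,
    M.tsum_discounted_sum_stateDist_mul hπ]
  simp [e, stateDist, add_comm]

theorem Jret_eq_Jret_add_dDist_adv (hπ : IsPolicy π) {π' : S → A → ℝ} (hπ' : IsPolicy π')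
    {f : S → A → S → ℝ} {V : S → ℝ} (hV : IsValue M π' f V) :
    Jret M π f = Jret M π' f +
      (1 / (1 - M.γ)) * ∑ s, dDist M π s * ∑ a, π s a * adv M f V s a := by
  rw [M.Jret_eq_initial_add_dDist_adv hπ f V, M.Jret_eq_initial_add_dDist_adv hπ' f V]
  simp [M.sum_policy_mul_adv_eq_zero hπ' hV]

end MDP

theorem constrained_policy_iteration_monotone_general {S A : Type} [Fintype S] [Fintype A]
    (M : MDP S A) (m : ℕ)
    (R : S → A → S → ℝ) (C : Fin m → S → A → S → ℝ) (d : Fin m → ℝ)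
    (πk πk1 : S → A → ℝ) (hπk : IsPolicy πk) (hπk1 : IsPolicy πk1)
    (VR : S → ℝ) (hVR : IsValue M πk R VR)
    (VC : Fin m → S → ℝ) (hVC : ∀ i, IsValue M πk (C i) (VC i))
    -- the current policy `π_k` is feasible
    (hfeas : ∀ i, Jret M πk (C i) ≤ d i)
    -- `π_{k+1}` satisfies the surrogate constraints
    (hcons : ∀ i, Jret M πk (C i) +
      (1 / (1 - M.γ)) * ∑ s, dDist M πk1 s * ∑ a, πk1 s a * adv M (C i) (VC i) s a ≤ d i)
    -- `π_{k+1}` maximizes the surrogate objective among all policies satisfying them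
    (hmax : ∀ π : S → A → ℝ, IsPolicy π →
      (∀ i, Jret M πk (C i) +
        (1 / (1 - M.γ)) * ∑ s, dDist M π s * ∑ a, π s a * adv M (C i) (VC i) s a ≤ d i) →
      (∑ s, dDist M π s * ∑ a, π s a * adv M R VR s a) ≤
        ∑ s, dDist M πk1 s * ∑ a, πk1 s a * adv M R VR s a) :
    Jret M πk R ≤ Jret M πk1 R ∧ ∀ i, Jret M πk1 (C i) ≤ d i := by
  have hπk_admissible : ∀ i, Jret M πk (C i) +
      (1 / (1 - M.γ)) * ∑ s, dDist M πk s * ∑ a, πk s a * adv M (C i) (VC i) s a ≤ d i :=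
    fun i => by simpa [M.sum_policy_mul_adv_eq_zero hπk (hVC i)] using hfeas i
  have hgain : 0 ≤ ∑ s, dDist M πk1 s * ∑ a, πk1 s a * adv M R VR s a := by
    simpa [M.sum_policy_mul_adv_eq_zero hπk hVR] using hmax πk hπk hπk_admissible
  refine ⟨?_, fun i => ?_⟩
  · rw [M.Jret_eq_Jret_add_dDist_adv hπk1 hπk hVR]
    exact le_add_of_nonneg_right (mul_nonneg (one_div_nonneg.2 (sub_pos.2 M.γ_lt_one).le) hgain)
  · rw [M.Jret_eq_Jret_add_dDist_adv hπk1 hπk (hVC i)]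
    exact hcons i

/-- Proposition 1 (finite-state version): the constrained policy iteration step
yields monotonic return improvement and hard constraint satisfaction. -/
theorem constrained_policy_iteration_monotone {S A : Type} [Fintype S] [Fintype A]
    [Nonempty S] [Nonempty A] (M : MDP S A) (m : ℕ)
    (R : S → A → S → ℝ) (C : Fin m → S → A → S → ℝ) (d : Fin m → ℝ)
    (πk πk1 : S → A → ℝ) (hπk : IsPolicy πk) (hπk1 : IsPolicy πk1)
    (VR : S → ℝ) (hVR : IsValue M πk R VR)
    (VC : Fin m → S → ℝ) (hVC : ∀ i, IsValue M πk (C i) (VC i))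
    -- the current policy `π_k` is feasible
    (hfeas : ∀ i, Jret M πk (C i) ≤ d i)
    -- `π_{k+1}` satisfies the surrogate constraints
    (hcons : ∀ i, Jret M πk (C i) +
      (1 / (1 - M.γ)) * ∑ s, dDist M πk1 s * ∑ a, πk1 s a * adv M (C i) (VC i) s a ≤ d i)
    -- `π_{k+1}` maximizes the surrogate objective among all policies satisfying them
    (hmax : ∀ π : S → A → ℝ, IsPolicy π →
      (∀ i, Jret M πk (C i) +
        (1 / (1 - M.γ)) * ∑ s, dDist M π s * ∑ a, π s a * adv M (C i) (VC i) s a ≤ d i) →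
      (∑ s, dDist M π s * ∑ a, π s a * adv M R VR s a) ≤
        ∑ s, dDist M πk1 s * ∑ a, πk1 s a * adv M R VR s a) :
    Jret M πk R ≤ Jret M πk1 R ∧ ∀ i, Jret M πk1 (C i) ≤ d i :=
  constrained_policy_iteration_monotone_general M m R C d πk πk1 hπk hπk1 VR hVR VC hVC hfeas hcons
    hmax
end
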